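/- arXiv:1903.03551 — 4 statements merged into one kernel-verified Lean document; each statement's English description precedes it below -/
import Mathlib

section
/- Let (X,T) be a topological dynamical system such that the set M_p of T-periodic measures is dense in M(T) (in the weak topology). Then, for each s ∈ (0,1), the set FD = {μ ∈ M(T) : D⁻_μ(s) = 0} is a residual subset of M(T). -/
/-!
A periodic measure `ν` is carried by finitely many atoms, each of mass `> c > 0`. Fix a small
scale `ε`, a finite cover of `X` by `ε`-balls with `N` centres, and let `V` be the
`ε`-neighbourhood of the atoms. A measure `μ` weakly close to `ν` still gives mass `> c` to the
`ε`-balls around the atoms (lower semicontinuity on open sets) and small mass `μ(Vᶜ)` to the closed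
set `Vᶜ`. Then `μ(B(x,2ε))^(s-1) ≤ c^(s-1)` on `V`, while each piece of `Vᶜ` cut out by a ball of
the cover contributes at most `μ(Vᶜ)^s`; so `I_μ(s,2ε) ≤ c^(s-1) + N μ(Vᶜ)^s`, which stays bounded
while `ε^(-r)` is huge. Hence, for each `r` and each upper bound on `ε`, the measures with
`I_μ(s,ε) < ε^(-r)` at some scale contain an open dense set, and a countable intersection gives
`D⁻_μ(s) ≤ r` for all `r > 0`. Since `s < 1` and `μ` is a probability measure, `I_μ(s,ε) ≥ 1`,
so `D⁻_μ(s) ≥ 0`.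
-/

open MeasureTheory Filter Topology Metric Set
open scoped ENNReal NNReal

section Defs

variable {X : Type*} [MetricSpace X] [MeasurableSpace X]

/-- The topological support of a Borel measure on a metric space: the set of points all of whose
balls have positive measure. -/
def msupp (μ : Measure X) : Set X := {x : X | ∀ ε > 0, 0 < μ (ball x ε)}

/-- The energy function `I_μ(q, ε) = ∫_{supp μ} μ(B(x,ε))^(q-1) dμ(x)`. -/
noncomputable def energyI (μ : Measure X) (q ε : ℝ) : ℝ :=
  ∫ x in msupp μ, (μ (ball x ε)).toReal ^ (q - 1) ∂μ

/-- The lower `q`-generalized fractal dimension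
`D⁻_μ(q) = liminf_{ε→0⁺} log I_μ(q,ε) / ((q-1) log ε)` (as an extended real number). -/
noncomputable def Dlower (μ : Measure X) (q : ℝ) : EReal :=
  liminf (fun ε : ℝ =>
    ((Real.log (energyI μ q ε) / ((q - 1) * Real.log ε) : ℝ) : EReal)) (𝓝[>] (0 : ℝ))

/-- The upper `q`-generalized fractal dimension
`D⁺_μ(q) = limsup_{ε→0⁺} log I_μ(q,ε) / ((q-1) log ε)` (as an extended real number). -/
noncomputable def Dupper (μ : Measure X) (q : ℝ) : EReal :=
  limsup (fun ε : ℝ =>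
    ((Real.log (energyI μ q ε) / ((q - 1) * Real.log ε) : ℝ) : EReal)) (𝓝[>] (0 : ℝ))

/-- `∫_{supp μ} log μ(B(x,ε)) dμ(x)`, the numerator in the entropy dimension. -/
noncomputable def entNum (μ : Measure X) (ε : ℝ) : ℝ :=
  ∫ x in msupp μ, Real.log (μ (ball x ε)).toReal ∂μ

/-- The lower entropy dimension
`D⁻_μ(1) = liminf_{ε→0⁺} (∫_{supp μ} log μ(B(x,ε)) dμ(x)) / log ε`. -/
noncomputable def D1lower (μ : Measure X) : EReal :=
  liminf (fun ε : ℝ => ((entNum μ ε / Real.log ε : ℝ) : EReal)) (𝓝[>] (0 : ℝ))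

/-- The upper entropy dimension
`D⁺_μ(1) = limsup_{ε→0⁺} (∫_{supp μ} log μ(B(x,ε)) dμ(x)) / log ε`. -/
noncomputable def D1upper (μ : Measure X) : EReal :=
  limsup (fun ε : ℝ => ((entNum μ ε / Real.log ε : ℝ) : EReal)) (𝓝[>] (0 : ℝ))

/-- A measure is `T`-invariant if `μ(T⁻¹ s) = μ s` for every measurable `s`. -/
def IsInvariantMeasure (T : X → X) (μ : Measure X) : Prop :=
  ∀ s : Set X, MeasurableSet s → μ (T ⁻¹' s) = μ s

/-- `M(T)`: the set of `T`-invariant Borel probability measures on `X`. -/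
def invSet (T : X → X) : Set (ProbabilityMeasure X) :=
  {μ : ProbabilityMeasure X | IsInvariantMeasure T μ.toMeasure}

/-- A `T`-periodic measure: `μ = (1/k) ∑_{i<k} δ_{T^i x}` for a `T`-periodic point `x`
of period `k`. -/
def IsPeriodicMeasure (T : X → X) (μ : ProbabilityMeasure X) : Prop :=
  ∃ (x : X) (k : ℕ), 0 < k ∧ T^[k] x = x ∧
    μ.toMeasure = (k : ℝ≥0∞)⁻¹ • ∑ i ∈ Finset.range k, Measure.dirac (T^[i] x)

/-- The upper Hausdorff dimension of a measure:
`dim_H^+(μ) = inf {dimH E | E Borel, μ(X \ E) = 0}`. -/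
noncomputable def dimHplus (μ : Measure X) : ℝ≥0∞ :=
  ⨅ (E : Set X) (_ : MeasurableSet E) (_ : μ Eᶜ = 0), dimH E

/-- The lower Hausdorff dimension of a measure:
`dim_H^-(μ) = inf {dimH E | E Borel, μ(E) > 0}`. -/
noncomputable def dimHminus (μ : Measure X) : ℝ≥0∞ :=
  ⨅ (E : Set X) (_ : MeasurableSet E) (_ : 0 < μ E), dimH E

/-- The return time `τ_s(x) = inf {k ≥ 1 | T^k x ∈ B(x,s)}`. -/
noncomputable def tauRet (T : X → X) (s : ℝ) (x : X) : ℕ :=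
  sInf {k : ℕ | 0 < k ∧ T^[k] x ∈ ball x s}

/-- The lower recurrence rate `R̲(x) = liminf_{s→0⁺} log τ_s(x) / (-log s)`. -/
noncomputable def Rlower (T : X → X) (x : X) : EReal :=
  liminf (fun s : ℝ =>
    ((Real.log (tauRet T s x : ℝ) / (-Real.log s) : ℝ) : EReal)) (𝓝[>] (0 : ℝ))

open Classical in
/-- The lower local dimension `d̲_μ(x) = liminf_{ε→0⁺} log μ(B(x,ε)) / log ε` when all balls
around `x` have positive measure, and `+∞` otherwise. -/
noncomputable def dLoc (μ : Measure X) (x : X) : EReal :=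
  if (∀ ε > 0, 0 < μ (ball x ε)) then
    liminf (fun ε : ℝ =>
      ((Real.log (μ (ball x ε)).toReal / Real.log ε : ℝ) : EReal)) (𝓝[>] (0 : ℝ))
  else ⊤

/-- The auxiliary continuous kernel `f^ε_x(y)`: equal to `1` if `dist x y ≤ ε`, to
`2 - dist x y / ε` if `ε ≤ dist x y ≤ 2ε`, and to `0` if `dist x y ≥ 2ε`. -/
noncomputable def fker (ε : ℝ) (x y : X) : ℝ :=
  if dist x y ≤ ε then 1 else if dist x y ≤ 2 * ε then 2 - dist x y / ε else 0

/-- `f_ε(μ, x) = ∫ f^ε_x(y) dμ(y)`. -/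
noncomputable def feps (ε : ℝ) (μ : Measure X) (x : X) : ℝ := ∫ y, fker ε x y ∂μ

/-- `G` is a finite covering of `X` by open balls of radius `ε` (given by its finite set of
centers). -/
def IsBallCover (ε : ℝ) (G : Finset X) : Prop := (⋃ x ∈ G, ball x ε) = univ

/-- `S_μ(s,ε) = inf_G ∑_{x ∈ G} μ(B(x,ε))^s`, the infimum running over all finite coverings of
`X` by balls of radius `ε`. -/
noncomputable def Sfun (μ : Measure X) (s ε : ℝ) : ℝ :=
  ⨅ G : {H : Finset X // IsBallCover ε H}, ∑ x ∈ G.val, (μ (ball x ε)).toReal ^ s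

/-- `W_μ(s,ε) = inf_G ∑_{x ∈ G} f_ε(μ,x)^s`, the infimum running over all finite coverings of
`X` by balls of radius `ε`. -/
noncomputable def Wfun (μ : Measure X) (s ε : ℝ) : ℝ :=
  ⨅ G : {H : Finset X // IsBallCover ε H}, ∑ x ∈ G.val, (feps ε μ x) ^ s

/-- The regularized energy function `J_μ(q,ε) = ∫ f_ε(μ,x)^(q-1) dμ(x)`. -/
noncomputable def Jfun (μ : Measure X) (q ε : ℝ) : ℝ :=
  ∫ x, (feps ε μ x) ^ (q - 1) ∂μ

end Defs

section Shift

variable {M : Type*} [MetricSpace M]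

/-- The "cylinder ball" `B^n(x,ε) = {y | d(x_i, y_i) < ε for all |i| ≤ n}` in `M^ℤ`. -/
def cylBall (n : ℕ) (x : ℤ → M) (ε : ℝ) : Set (ℤ → M) :=
  {y : ℤ → M | ∀ i : ℤ, |i| ≤ (n : ℤ) → dist (x i) (y i) < ε}

/-- For `ε ∈ (0,1)`, the largest integer `n ≥ 0` with `ε < 1/(n²+1)`. -/
noncomputable def nZero (ε : ℝ) : ℕ := sSup {n : ℕ | ε < 1 / ((n : ℝ) ^ 2 + 1)}

/-- The modified energy function `I^n_μ(q,ε) = ∫ μ(B^n(x,ε))^(q-1) dμ(x)`. -/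
noncomputable def Icyl [MeasurableSpace (ℤ → M)] (μ : Measure (ℤ → M)) (n : ℕ) (q ε : ℝ) :
    ℝ :=
  ∫ x, (μ (cylBall n x ε)).toReal ^ (q - 1) ∂μ

end Shift

lemma ENNReal.rpow_le_rpow_of_nonpos {x y : ℝ≥0∞} {z : ℝ} (hxy : x ≤ y) (hz : z ≤ 0) :
    y ^ z ≤ x ^ z := by
  rw [← neg_neg z, ENNReal.rpow_neg y, ENNReal.rpow_neg x]
  exact ENNReal.inv_le_inv.2 (ENNReal.rpow_le_rpow hxy (neg_nonneg.2 hz))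

section Energy

variable {X : Type*} [MetricSpace X] [MeasurableSpace X]

lemma msupp_eq_support (μ : Measure X) : msupp μ = μ.support := by
  ext x
  exact Metric.nhds_basis_ball.mem_measureSupport.symm

lemma measurableSet_msupp [OpensMeasurableSpace X] (μ : Measure X) :
    MeasurableSet (msupp μ) :=
  (msupp_eq_support μ ▸ Measure.isClosed_support).measurableSet

lemma energyI_nonneg (μ : Measure X) (q ε : ℝ) : 0 ≤ energyI μ q ε :=
  integral_nonneg fun _ => Real.rpow_nonneg ENNReal.toReal_nonneg _

/-- `energyI` takes the junk value `0` when its integrand is not integrable, so only its `log`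
is nonnegative in general. -/
lemma log_energyI_nonneg [OpensMeasurableSpace X] [HereditarilyLindelofSpace X]
    (μ : Measure X) [IsProbabilityMeasure μ] {q ε : ℝ} (hq : q ≤ 1) (hε : 0 < ε) :
    0 ≤ Real.log (energyI μ q ε) := by
  by_cases hint : IntegrableOn (fun x => (μ (ball x ε)).toReal ^ (q - 1)) (msupp μ) μ
  · refine Real.log_nonneg ?_
    have hsupp : μ (msupp μ) = 1 := by
      rw [← prob_compl_eq_zero_iff (measurableSet_msupp μ), msupp_eq_support]
      exact Measure.measure_compl_support
    calc (1 : ℝ) = ∫ _ in msupp μ, (1 : ℝ) ∂μ := by simp [measureReal_def, hsupp]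
      _ ≤ energyI μ q ε := by
        refine setIntegral_mono_on (integrableOn_const (measure_ne_top μ _)) hint
          (measurableSet_msupp μ) fun x hx => ?_
        exact Real.one_le_rpow_of_pos_of_le_one_of_nonpos
          (ENNReal.toReal_pos (hx ε hε).ne' (measure_ne_top μ _)) measureReal_le_one
          (by linarith)
  · rw [energyI, integral_undef hint, Real.log_zero]

lemma energyI_le_toReal_lintegral [OpensMeasurableSpace X] (μ : Measure X) [IsFiniteMeasure μ]
    (q : ℝ) {ε : ℝ} (hε : 0 < ε) (hfin : ∫⁻ x, μ (ball x ε) ^ (q - 1) ∂μ ≠ ∞) :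
    energyI μ q ε ≤ (∫⁻ x, μ (ball x ε) ^ (q - 1) ∂μ).toReal := by
  by_cases hint : IntegrableOn (fun x => (μ (ball x ε)).toReal ^ (q - 1)) (msupp μ) μ
  · rw [energyI, integral_eq_lintegral_of_nonneg_ae (ae_of_all _ fun _ => by positivity) hint.1]
    refine ENNReal.toReal_mono hfin ((setLIntegral_congr_fun (measurableSet_msupp μ)
      fun x hx => ?_).trans_le (setLIntegral_le_lintegral _ _))
    rw [← ENNReal.ofReal_rpow_of_pos (ENNReal.toReal_pos (hx ε hε).ne' (measure_ne_top _ _)),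
      ENNReal.ofReal_toReal (measure_ne_top _ _)]
  · rw [energyI, integral_undef hint]
    exact ENNReal.toReal_nonneg

/-- A point `x` within `ε` of `P` has `μ (ball x (2 * ε)) ≥ c`; any other `x` lies in a piece
`(thickening ε P)ᶜ ∩ ball z ε` of the cover, and that piece lies inside `ball x (2 * ε)`. -/
lemma lintegral_measure_ball_rpow_le [OpensMeasurableSpace X] (μ : Measure X)
    [IsProbabilityMeasure μ] {s ε : ℝ} (hs : s ∈ Ioc 0 1) (P : Set X) {c : ℝ≥0∞}
    (hc : ∀ o ∈ P, c ≤ μ (ball o ε)) {t : Finset X} (ht : IsBallCover ε t) :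
    ∫⁻ x, μ (ball x (2 * ε)) ^ (s - 1) ∂μ ≤
      c ^ (s - 1) + t.card * μ (thickening ε P)ᶜ ^ s := by
  have hs1 : s - 1 ≤ 0 := by linarith [hs.2]
  set V := thickening ε P
  set C : X → Set X := fun z => Vᶜ ∩ ball z ε
  have hC : ∀ z, MeasurableSet (C z) := fun z =>
    isOpen_thickening.measurableSet.compl.inter measurableSet_ball
  have hball : ∀ x y : X, dist x y < ε → ball y ε ⊆ ball x (2 * ε) := fun x y h =>
    ball_subset_ball' (by rw [dist_comm]; linarith)
  have hpt : ∀ x, μ (ball x (2 * ε)) ^ (s - 1) ≤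
      c ^ (s - 1) + ∑ z ∈ t, (C z).indicator (fun _ => μ (C z) ^ (s - 1)) x := by
    intro x
    by_cases hx : x ∈ V
    · obtain ⟨o, ho, hxo⟩ := mem_thickening_iff.1 hx
      exact le_add_right (ENNReal.rpow_le_rpow_of_nonpos
        ((hc o ho).trans (measure_mono (hball x o hxo))) hs1)
    · obtain ⟨z, hz, hxz⟩ : ∃ z, ∃ _ : z ∈ t, x ∈ ball z ε :=
        mem_iUnion₂.1 (ht.symm ▸ mem_univ x)
      refine le_add_left (le_trans ?_ (Finset.single_le_sum (fun _ _ => zero_le) hz))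
      rw [indicator_of_mem (show x ∈ C z from ⟨hx, hxz⟩)]
      exact ENNReal.rpow_le_rpow_of_nonpos
        (measure_mono (inter_subset_right.trans (hball x z hxz))) hs1
  have hpiece : ∀ z, μ (C z) ^ (s - 1) * μ (C z) ≤ μ Vᶜ ^ s := fun z => by
    have h := ENNReal.rpow_add_of_add_pos (measure_ne_top μ (C z)) (s - 1) 1 (by linarith [hs.1])
    rw [ENNReal.rpow_one, sub_add_cancel] at h
    rw [← h]
    exact ENNReal.rpow_le_rpow (measure_mono inter_subset_left) hs.1.le
  calc ∫⁻ x, μ (ball x (2 * ε)) ^ (s - 1) ∂μ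
      ≤ ∫⁻ x, c ^ (s - 1) + ∑ z ∈ t, (C z).indicator (fun _ => μ (C z) ^ (s - 1)) x ∂μ :=
        lintegral_mono hpt
    _ = c ^ (s - 1) + ∑ z ∈ t, μ (C z) ^ (s - 1) * μ (C z) := by
        rw [lintegral_add_left measurable_const, lintegral_const, measure_univ, mul_one,
          lintegral_finsetSum _ fun z _ => measurable_const.indicator (hC z)]
        simp only [lintegral_indicator_const (hC _)]
    _ ≤ c ^ (s - 1) + t.card * μ Vᶜ ^ s := by
        gcongr
        simpa using Finset.sum_le_sum fun z (_ : z ∈ t) => hpiece z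

end Energy

namespace MeasureTheory.ProbabilityMeasure

variable {Ω : Type*} [MeasurableSpace Ω] [TopologicalSpace Ω] [OpensMeasurableSpace Ω]
  [HasOuterApproxClosed Ω] {ν : ProbabilityMeasure Ω}

lemma eventually_lt_measure_of_isOpen {U : Set Ω} (hU : IsOpen U) {c : ℝ≥0∞}
    (hc : c < (ν : Measure Ω) U) : ∀ᶠ μ : ProbabilityMeasure Ω in 𝓝 ν, c < (μ : Measure Ω) U :=
  eventually_lt_of_lt_liminf (hc.trans_le (le_liminf_measure_open_of_tendsto tendsto_id hU))

lemma eventually_measure_lt_of_isClosed {F : Set Ω} (hF : IsClosed F) {c : ℝ≥0∞}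
    (hc : (ν : Measure Ω) F < c) : ∀ᶠ μ : ProbabilityMeasure Ω in 𝓝 ν, (μ : Measure Ω) F < c :=
  eventually_lt_of_limsup_lt ((limsup_measure_closed_le_of_tendsto tendsto_id hF).trans_lt hc)

lemma tendsto_measure_of_isClosed_of_measure_eq_zero {F : Set Ω} (hF : IsClosed F)
    (hν : (ν : Measure Ω) F = 0) : Tendsto (fun μ : ProbabilityMeasure Ω => (μ : Measure Ω) F)
      (𝓝 ν) (𝓝 0) :=
  ENNReal.tendsto_nhds_zero.2 fun _ hc =>
    (eventually_measure_lt_of_isClosed hF (hν ▸ hc)).mono fun _ h => h.le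

end MeasureTheory.ProbabilityMeasure

lemma IsPeriodicMeasure.exists_finset_atoms {X : Type*} [MeasurableSpace X]
    [MeasurableSingletonClass X] {T : X → X}
    {μ : ProbabilityMeasure X} (h : IsPeriodicMeasure T μ) :
    ∃ (P : Finset X) (c : ℝ≥0∞), c ≠ 0 ∧ (μ : Measure X) P = 1 ∧
      ∀ o ∈ P, c < (μ : Measure X) {o} := by
  classical
  obtain ⟨x, k, hk, -, hμ⟩ := h
  have hk0 : (k : ℝ≥0∞) ≠ 0 := Nat.cast_ne_zero.2 hk.ne'
  have hinv0 : (k : ℝ≥0∞)⁻¹ ≠ 0 := ENNReal.inv_ne_zero.2 (ENNReal.natCast_ne_top k)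
  refine ⟨(Finset.range k).image (T^[·] x), (k : ℝ≥0∞)⁻¹ / 2,
    (ENNReal.half_pos hinv0).ne', ?_, ?_⟩
  · rw [hμ, Measure.smul_apply, smul_eq_mul, Measure.finsetSum_apply,
      Finset.sum_congr rfl fun i hi => Measure.dirac_apply_of_mem
        (Finset.mem_coe.2 (Finset.mem_image_of_mem (T^[·] x) hi))]
    simp [ENNReal.inv_mul_cancel hk0 (ENNReal.natCast_ne_top k)]
  · simp only [Finset.mem_image, Finset.mem_range, forall_exists_index, and_imp]
    rintro _ i hi rfl
    calc (k : ℝ≥0∞)⁻¹ / 2 < (k : ℝ≥0∞)⁻¹ * 1 :=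
          by simpa using ENNReal.half_lt_self hinv0 (ENNReal.inv_ne_top.2 hk0)
      _ ≤ (μ : Measure X) {T^[i] x} := by
          rw [hμ, Measure.smul_apply, smul_eq_mul, Measure.finsetSum_apply]
          gcongr
          exact (Measure.dirac_apply_of_mem (mem_singleton _)).symm.trans_le
            (Finset.single_le_sum (f := fun j => Measure.dirac (T^[j] x) {T^[i] x})
              (fun _ _ => zero_le) (Finset.mem_range.2 hi))

/-- The scale `ε` depends on `ν` alone, chosen so that `ε ^ q > c ^ (s - 1) + 1`; the
neighbourhood of `ν` keeps the mass of the `ε/2`-balls around the atoms above `c` and makes the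
bound `t.card * μ(Vᶜ) ^ s` of `lintegral_measure_ball_rpow_le` less than `1`. -/
lemma eventually_exists_energyI_lt {X : Type*} [MetricSpace X] [CompactSpace X]
    [MeasurableSpace X] [BorelSpace X] {ν : ProbabilityMeasure X} {P : Finset X} {c : ℝ≥0∞}
    (hc0 : c ≠ 0) (hP : (ν : Measure X) P = 1) (hc : ∀ o ∈ P, c < (ν : Measure X) {o})
    {s q η : ℝ} (hs : s ∈ Ioc 0 1) (hq : q < 0) (hη : 0 < η) :
    ∀ᶠ μ : ProbabilityMeasure X in 𝓝 ν,
      ∃ ε ∈ Ioo 0 η, energyI (μ : Measure X) s ε < ε ^ q := by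
  have hK : c ^ (s - 1) + 1 ≠ ∞ := by
    simpa [ENNReal.rpow_eq_top_iff, hc0] using fun _ : c = ∞ => by linarith [hs.2]
  obtain ⟨ε', ⟨hε'η, hthr⟩, hε'0⟩ : ∃ ε', (ε' < η ∧ c ^ (s - 1) + 1 < ENNReal.ofReal (ε' ^ q))
      ∧ 0 < ε' :=
    ((((eventually_lt_nhds hη).filter_mono nhdsWithin_le_nhds).and
      ((ENNReal.tendsto_ofReal_atTop.comp (tendsto_rpow_neg_nhdsGT_zero hq)).eventually
        (eventually_gt_nhds hK.lt_top))).and self_mem_nhdsWithin).exists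
  set ε := ε' / 2
  have hε0 : 0 < ε := half_pos hε'0
  obtain ⟨t, ht⟩ : ∃ t : Finset X, IsBallCover ε t := by
    obtain ⟨t, ht⟩ := isCompact_univ.elim_finite_subcover (fun z : X => ball z ε)
      (fun _ => isOpen_ball) fun x _ => mem_iUnion.2 ⟨x, mem_ball_self hε0⟩
    exact ⟨t, eq_univ_of_univ_subset ht⟩
  set V := thickening ε (P : Set X)
  have hνV : (ν : Measure X) Vᶜ = 0 :=
    measure_mono_null (compl_subset_compl.2 (self_subset_thickening hε0 _))
      ((prob_compl_eq_zero_iff P.finite_toSet.measurableSet).2 hP)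
  have hfar : Tendsto (fun μ : ProbabilityMeasure X => t.card * (μ : Measure X) Vᶜ ^ s)
      (𝓝 ν) (𝓝 0) := by
    simpa [ENNReal.zero_rpow_of_pos hs.1] using ENNReal.Tendsto.const_mul
      (((ENNReal.continuous_rpow_const (y := s)).tendsto 0).comp
        (ProbabilityMeasure.tendsto_measure_of_isClosed_of_measure_eq_zero
          isOpen_thickening.isClosed_compl hνV))
      (Or.inr (ENNReal.natCast_ne_top t.card))
  have hnear : ∀ᶠ μ : ProbabilityMeasure X in 𝓝 ν, ∀ o ∈ P, c < (μ : Measure X) (ball o ε) :=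
    (eventually_all_finset P).2 fun o ho =>
      ProbabilityMeasure.eventually_lt_measure_of_isOpen isOpen_ball
        ((hc o ho).trans_le (measure_mono (singleton_subset_iff.2 (mem_ball_self hε0))))
  filter_upwards [hnear, hfar.eventually (eventually_lt_nhds one_pos)] with μ hμP hμV
  have hL := lintegral_measure_ball_rpow_le (μ : Measure X) hs P (fun o ho => (hμP o ho).le) ht
  rw [show 2 * ε = ε' by ring] at hL
  have hB := hL.trans_lt ((ENNReal.add_lt_add_left (by simpa using hK) hμV).trans hthr)
  exact ⟨ε', ⟨hε'0, hε'η⟩, (energyI_le_toReal_lintegral _ s hε'0 hB.ne_top).trans_lt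
    (ENNReal.toReal_lt_of_lt_ofReal hB)⟩

section Dimension

variable {X : Type*} [MetricSpace X] [MeasurableSpace X]

lemma dlower_nonneg [OpensMeasurableSpace X] [HereditarilyLindelofSpace X] (μ : Measure X)
    [IsProbabilityMeasure μ] {q : ℝ} (hq : q < 1) : 0 ≤ Dlower μ q := by
  refine le_trans (liminf_const (0 : EReal)).symm.le (liminf_le_liminf ?_)
  filter_upwards [Ioo_mem_nhdsGT one_pos] with ε hε
  exact EReal.coe_nonneg.2 (div_nonneg (log_energyI_nonneg μ hq.le hε.1)
    (mul_nonneg_of_nonpos_of_nonpos (by linarith) (Real.log_nonpos hε.1.le hε.2.le)))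

lemma dlower_le_of_frequently (μ : Measure X) {q r : ℝ} (hq : q < 1) (hr : 0 ≤ r)
    (h : ∃ᶠ ε in 𝓝[>] 0, energyI μ q ε < ε ^ ((q - 1) * r)) : Dlower μ q ≤ r := by
  refine liminf_le_of_frequently_le' ((h.and_eventually (Ioo_mem_nhdsGT one_pos)).mono ?_)
  rintro ε ⟨hE, hε0, hε1⟩
  have hlog : Real.log ε < 0 := Real.log_neg hε0 hε1
  rw [EReal.coe_le_coe_iff, div_le_iff₀ (mul_pos_of_neg_of_neg (by linarith) hlog)]
  calc Real.log (energyI μ q ε) ≤ Real.log (ε ^ ((q - 1) * r)) := by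
        rcases (energyI_nonneg μ q ε).eq_or_lt with h0 | hpos
        · rw [← h0, Real.log_zero]
          exact Real.log_nonneg (Real.one_le_rpow_of_pos_of_le_one_of_nonpos hε0 hε1.le
            (mul_nonpos_of_nonpos_of_nonneg (by linarith) hr))
        · exact (Real.log_lt_log hpos hE).le
    _ = r * ((q - 1) * Real.log ε) := by rw [Real.log_rpow hε0]; ring

lemma dlower_eq_zero_of_frequently [OpensMeasurableSpace X] [HereditarilyLindelofSpace X]
    (μ : Measure X) [IsProbabilityMeasure μ] {q : ℝ} (hq : q < 1)
    (h : ∀ n : ℕ, ∃ᶠ ε in 𝓝[>] 0, energyI μ q ε < ε ^ ((q - 1) * (1 / ((n : ℝ) + 1)))) :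
    Dlower μ q = 0 := by
  refine le_antisymm (le_of_forall_gt_imp_ge_of_dense fun a ha => ?_) (dlower_nonneg μ hq)
  obtain ⟨r, hr0, hra⟩ := EReal.lt_iff_exists_real_btwn.1 ha
  obtain ⟨n, hn⟩ := exists_nat_one_div_lt (EReal.coe_pos.1 hr0)
  exact (dlower_le_of_frequently μ hq (by positivity) (h n)).trans
    ((EReal.coe_lt_coe_iff.2 hn).trans hra).le

end Dimension

lemma frequently_nhdsGT_zero_of_forall_nat {p : ℝ → Prop}
    (h : ∀ n : ℕ, ∃ ε ∈ Ioo 0 (1 / ((n : ℝ) + 1)), p ε) : ∃ᶠ ε in 𝓝[>] 0, p ε := by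
  refine (nhdsGT_basis (0 : ℝ)).frequently_iff.2 fun a ha => ?_
  obtain ⟨n, hn⟩ := exists_nat_one_div_lt ha
  obtain ⟨ε, hε, hp⟩ := h n
  exact ⟨ε, ⟨hε.1, hε.2.trans hn⟩, hp⟩

lemma mem_residual_of_dense_of_forall_mem_nhds {α : Type*} [TopologicalSpace α] {s D : Set α}
    (hD : Dense D) (h : ∀ x ∈ D, s ∈ 𝓝 x) : s ∈ residual α :=
  mem_of_superset (residual_of_dense_open isOpen_interior
    (hD.mono fun x hx => mem_interior_iff_mem_nhds.2 (h x hx))) interior_subset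

theorem statement0_general {X : Type*} [MetricSpace X] [CompactSpace X]
    [MeasurableSpace X] [BorelSpace X]
    (T : X → X)
    (hdense : Dense {μ : ↥(invSet T) | IsPeriodicMeasure T μ.val})
    (s : ℝ) (hs : s ∈ Ioo (0 : ℝ) 1) :
    {μ : ↥(invSet T) | Dlower μ.val.toMeasure s = (0 : EReal)} ∈ residual ↥(invSet T) := by
  have hsmall : ∀ m n : ℕ, {μ : ↥(invSet T) | ∃ ε ∈ Ioo 0 (1 / ((n : ℝ) + 1)),
      energyI μ.val.toMeasure s ε < ε ^ ((s - 1) * (1 / ((m : ℝ) + 1)))} ∈ residual _ :=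
    fun m n => mem_residual_of_dense_of_forall_mem_nhds hdense fun ν hν => by
      obtain ⟨P, c, hc0, hP, hc⟩ := hν.exists_finset_atoms
      exact continuous_subtype_val.continuousAt.preimage_mem_nhds
        (eventually_exists_energyI_lt hc0 hP hc ⟨hs.1, hs.2.le⟩
          (mul_neg_of_neg_of_pos (by linarith [hs.2]) (by positivity)) (by positivity))
  filter_upwards [countable_iInter_mem.2 fun m => countable_iInter_mem.2 (hsmall m)] with μ hμ
  simp only [mem_iInter] at hμ
  exact dlower_eq_zero_of_frequently _ hs.2 fun m => frequently_nhdsGT_zero_of_forall_nat (hμ m)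

/-- For a topological dynamical system `(X,T)` with the `T`-periodic measures
dense in `M(T)`, for each `s ∈ (0,1)` the set `{μ ∈ M(T) | D⁻_μ(s) = 0}` is residual in `M(T)`. -/
theorem statement0 {X : Type*} [MetricSpace X] [CompactSpace X]
    [MeasurableSpace X] [BorelSpace X]
    (T : X → X) (hT : Continuous T)
    (hdense : Dense {μ : ↥(invSet T) | IsPeriodicMeasure T μ.val})
    (s : ℝ) (hs : s ∈ Ioo (0 : ℝ) 1) :
    {μ : ↥(invSet T) | Dlower μ.val.toMeasure s = (0 : EReal)} ∈ residual ↥(invSet T) :=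
  statement0_general T hdense s hs
end

section
/- Let (X,T) be a topological dynamical system such that the set M_p of T-periodic measures is dense in M(T). Then the set HD = {μ ∈ M(T) : dim_H^+(μ) = 0} is a residual subset of M(T). -/
open MeasureTheory Filter Topology Metric Set
open scoped ENNReal NNReal

/-! A probability measure has zero upper Hausdorff dimension as soon as, for each `s > 0` and
each `n`, all but `2⁻ⁿ` of its mass sits on finitely many balls of radius `≤ 2⁻ⁿ` the sum of
the `s`-th powers of whose diameters is `≤ 2⁻ⁿ`: by Borel–Cantelli almost every point is eventually in
these unions of balls, and the set of such points has `s`-dimensional Hausdorff measure zero.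
Each of these conditions defines an open set of measures (mass on a closed set is upper
semicontinuous in the weak topology) containing every finitely supported measure, in particular
every periodic one, so the measures satisfying all of them form a countable intersection of
dense open subsets of `M(T)`. -/

lemma isOpen_setOf_measure_lt_of_isClosed {Ω : Type*} [TopologicalSpace Ω] [MeasurableSpace Ω]
    [OpensMeasurableSpace Ω] [HasOuterApproxClosed Ω] {F : Set Ω} (hF : IsClosed F) (c : ℝ≥0∞) :
    IsOpen {μ : ProbabilityMeasure Ω | μ.toMeasure F < c} :=
  isOpen_iff_mem_nhds.2 fun _ hμ => eventually_lt_of_limsup_lt <|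
    (ProbabilityMeasure.limsup_measure_closed_le_of_tendsto tendsto_id hF).trans_lt hμ

section ThinCover

variable {X : Type*} [MetricSpace X] [MeasurableSpace X]

def thinCoverSet (s : ℝ≥0) (δ : ℝ≥0∞) : Set (ProbabilityMeasure X) :=
  {μ | ∃ (F : Finset X) (r : ℝ≥0∞), r ≤ δ ∧ F.card * (2 * r) ^ (s : ℝ) ≤ δ ∧
    μ.toMeasure (⋃ x ∈ F, eball x r)ᶜ < δ}

lemma mem_thinCoverSet_of_measure_compl_finset_eq_zero {s : ℝ≥0} (hs : 0 < s) {δ : ℝ≥0∞}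
    (hδ : 0 < δ) {μ : ProbabilityMeasure X} {F : Finset X} (hF : μ.toMeasure (↑F)ᶜ = 0) :
    μ ∈ thinCoverSet s δ := by
  have hr : Tendsto (fun n : ℕ => (2⁻¹ : ℝ≥0∞) ^ n) atTop (𝓝 0) :=
    ENNReal.tendsto_pow_atTop_nhds_zero_of_lt_one (by norm_num)
  have h2r : Tendsto (fun n : ℕ => 2 * (2⁻¹ : ℝ≥0∞) ^ n) atTop (𝓝 0) := by
    simpa using ENNReal.Tendsto.const_mul hr (Or.inr ENNReal.ofNat_ne_top)
  have hsum : Tendsto (fun n : ℕ => F.card * (2 * (2⁻¹ : ℝ≥0∞) ^ n) ^ (s : ℝ)) atTop (𝓝 0) := by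
    have := ENNReal.Tendsto.const_mul
      (((ENNReal.continuous_rpow_const (y := (s : ℝ))).tendsto 0).comp h2r)
      (Or.inr (ENNReal.natCast_ne_top F.card))
    simpa [ENNReal.zero_rpow_of_pos (NNReal.coe_pos.2 hs)] using this
  obtain ⟨n, hn_le, hn_sum⟩ :=
    ((hr.eventually (gt_mem_nhds hδ)).and (hsum.eventually (gt_mem_nhds hδ))).exists
  refine ⟨F, 2⁻¹ ^ n, hn_le.le, hn_sum.le, ?_⟩
  have hcover : (↑F : Set X) ⊆ ⋃ x ∈ F, eball x (2⁻¹ ^ n) := fun x hx =>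
    mem_biUnion hx (Metric.mem_eball_self (ENNReal.pow_pos (by norm_num) n))
  exact (measure_mono_null (compl_subset_compl.2 hcover) hF).trans_lt hδ

lemma dimHplus_le_dimH_of_ae_mem {μ : Measure X} {A : Set X} (h : ∀ᵐ x ∂μ, x ∈ A) :
    dimHplus μ ≤ dimH A := by
  have hnull : μ (toMeasurable μ Aᶜ)ᶜᶜ = 0 := by
    rw [compl_compl, measure_toMeasurable]
    exact ae_iff.1 h
  exact iInf_le_of_le _ <| iInf_le_of_le (measurableSet_toMeasurable μ Aᶜ).compl <|
    iInf_le_of_le hnull <| dimH_mono (compl_subset_comm.1 (subset_toMeasurable μ Aᶜ))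

variable [BorelSpace X]

lemma isOpen_thinCoverSet (s : ℝ≥0) (δ : ℝ≥0∞) : IsOpen (thinCoverSet (X := X) s δ) := by
  have : thinCoverSet (X := X) s δ = ⋃ (F : Finset X) (r : ℝ≥0∞)
      (_ : r ≤ δ ∧ F.card * (2 * r) ^ (s : ℝ) ≤ δ),
      {μ : ProbabilityMeasure X | μ.toMeasure (⋃ x ∈ F, eball x r)ᶜ < δ} := by
    ext μ
    simp only [thinCoverSet, mem_ofPred_eq, mem_iUnion, exists_prop, and_assoc]
  rw [this]
  exact isOpen_iUnion fun F => isOpen_iUnion fun r => isOpen_iUnion fun _ =>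
    isOpen_setOf_measure_lt_of_isClosed
      (isOpen_biUnion fun x _ => Metric.isOpen_eball).isClosed_compl δ

lemma IsPeriodicMeasure.exists_finset_measure_compl_eq_zero {T : X → X}
    {μ : ProbabilityMeasure X} (hμ : IsPeriodicMeasure T μ) :
    ∃ F : Finset X, μ.toMeasure (↑F)ᶜ = 0 := by
  classical
  obtain ⟨x, k, -, -, hμ⟩ := hμ
  refine ⟨(Finset.range k).image (T^[·] x), ?_⟩
  rw [hμ, Measure.smul_apply, Measure.finsetSum_apply, Finset.sum_eq_zero, smul_zero]
  intro i hi
  rw [Measure.dirac_apply' _ (Finset.measurableSet _).compl,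
    indicator_of_notMem (by simpa using ⟨i, Finset.mem_range.1 hi, rfl⟩)]

lemma dimH_setOf_eventually_mem_biUnion_eball_le {s : ℝ≥0} {F : ℕ → Finset X}
    {r : ℕ → ℝ≥0∞} (hr : Tendsto r atTop (𝓝 0))
    (hsum : Tendsto (fun n => (F n).card * (2 * r n) ^ (s : ℝ)) atTop (𝓝 0)) :
    dimH {x | ∀ᶠ n in atTop, x ∈ ⋃ y ∈ F n, eball y (r n)} ≤ s := by
  refine dimH_le_of_hausdorffMeasure_ne_top (ne_top_of_le_ne_top ENNReal.zero_ne_top ?_)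
  simp only [eventually_atTop, ofPred_exists]
  refine (measure_iUnion_null fun m => ?_).le
  refine le_antisymm ?_ zero_le
  have hcover := Measure.hausdorffMeasure_le_liminf_sum (s : ℝ)
    {x | ∀ n ≥ m, x ∈ ⋃ y ∈ F n, eball y (r n)} (fun n => 2 * r n)
    (by simpa using ENNReal.Tendsto.const_mul hr (Or.inr ENNReal.ofNat_ne_top))
    (fun n (y : F n) => eball (y : X) (r n))
    (Eventually.of_forall fun n y => ediam_eball_le)
    (eventually_atTop.2 ⟨m, fun n hn x hx => by simpa using hx n hn⟩)
  refine hcover.trans ((liminf_le_liminf (Eventually.of_forall fun n => ?_)).trans_eq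
    hsum.liminf_eq)
  calc ∑ y : F n, ediam (eball (y : X) (r n)) ^ (s : ℝ)
      ≤ ∑ _y : F n, (2 * r n) ^ (s : ℝ) :=
        Finset.sum_le_sum fun y _ => ENNReal.rpow_le_rpow ediam_eball_le s.coe_nonneg
    _ = (F n).card * (2 * r n) ^ (s : ℝ) := by simp

lemma dimHplus_le_of_forall_mem_thinCoverSet {s : ℝ≥0} {μ : ProbabilityMeasure X}
    (hμ : ∀ n : ℕ, μ ∈ thinCoverSet s (2⁻¹ ^ n)) : dimHplus μ.toMeasure ≤ s := by
  choose F r hr hsum hmass using hμ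
  have hδ : Tendsto (fun n : ℕ => (2⁻¹ : ℝ≥0∞) ^ n) atTop (𝓝 0) :=
    ENNReal.tendsto_pow_atTop_nhds_zero_of_lt_one (by norm_num)
  have hmass_summable : ∑' n, μ.toMeasure (⋃ x ∈ F n, eball x (r n))ᶜ ≠ ∞ := by
    refine ne_top_of_le_ne_top ?_ (ENNReal.tsum_le_tsum fun n => (hmass n).le)
    simp [ENNReal.tsum_geometric, ENNReal.one_sub_inv_two]
  refine (dimHplus_le_dimH_of_ae_mem ?_).trans <| dimH_setOf_eventually_mem_biUnion_eball_le
    (tendsto_of_tendsto_of_tendsto_of_le_of_le tendsto_const_nhds hδ (fun _ => zero_le) hr)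
    (tendsto_of_tendsto_of_tendsto_of_le_of_le tendsto_const_nhds hδ (fun _ => zero_le) hsum)
  filter_upwards [ae_eventually_notMem hmass_summable] with x hx
  simpa only [mem_compl_iff, not_not] using hx

end ThinCover

theorem statement1_general {X : Type*} [MetricSpace X]
    [MeasurableSpace X] [BorelSpace X]
    (T : X → X)
    (hdense : Dense {μ : ↥(invSet T) | IsPeriodicMeasure T μ.val}) :
    {μ : ↥(invSet T) | dimHplus μ.val.toMeasure = 0} ∈ residual ↥(invSet T) := by
  have hW : ∀ j n : ℕ, Subtype.val ⁻¹' thinCoverSet (1 / ((j : ℝ≥0) + 1)) (2⁻¹ ^ n) ∈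
      residual ↥(invSet T) := fun j n =>
    residual_of_dense_open ((isOpen_thinCoverSet _ _).preimage continuous_subtype_val) <|
      hdense.mono fun μ hμ => by
        obtain ⟨F, hF⟩ := hμ.exists_finset_measure_compl_eq_zero
        exact mem_thinCoverSet_of_measure_compl_finset_eq_zero (by positivity)
          (ENNReal.pow_pos (by norm_num) n) hF
  filter_upwards [eventually_countable_forall.2 fun j => eventually_countable_forall.2 (hW j)]
    with μ hμ
  have hs : Tendsto (fun j : ℕ => ((1 / ((j : ℝ≥0) + 1) : ℝ≥0) : ℝ≥0∞)) atTop (𝓝 0) :=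
    ENNReal.tendsto_coe.2 tendsto_one_div_add_atTop_nhds_zero_nat
  exact le_antisymm (ge_of_tendsto' hs fun j => dimHplus_le_of_forall_mem_thinCoverSet (hμ j))
    zero_le

/-- For a topological dynamical system `(X,T)` with the `T`-periodic measures
dense in `M(T)`, the set `{μ ∈ M(T) | dim_H⁺(μ) = 0}` is residual in `M(T)`. -/
theorem statement1 {X : Type*} [MetricSpace X] [CompactSpace X]
    [MeasurableSpace X] [BorelSpace X]
    (T : X → X) (hT : Continuous T)
    (hdense : Dense {μ : ↥(invSet T) | IsPeriodicMeasure T μ.val}) :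
    {μ : ↥(invSet T) | dimHplus μ.val.toMeasure = 0} ∈ residual ↥(invSet T) :=
  statement1_general T hdense
end

section
/- Let (X,T) be a topological dynamical system such that the set M_p of T-periodic measures is dense in M(T). Then the set {μ ∈ M(T) : R̲(x) = 0 for μ-almost every x ∈ X} is a residual subset of M(T). -/
open MeasureTheory Filter Topology Metric Set
open scoped ENNReal NNReal

section St2Aux

open scoped ENNReal

set_option linter.unusedSectionVars false

variable {X : Type*} [MetricSpace X] [CompactSpace X] [MeasurableSpace X] [BorelSpace X]

/-- Points that return within `N` steps to their `s`-ball. -/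
def Oset (T : X → X) (N : ℕ) (s : ℝ) : Set X :=
  ⋃ k ∈ Finset.Icc 1 N, {x : X | dist (T^[k] x) x < s}

lemma isOpen_Oset (T : X → X) (hT : Continuous T) (N : ℕ) (s : ℝ) :
    IsOpen (Oset T N s) := by
  refine isOpen_biUnion fun k _ => ?_
  exact isOpen_lt (Continuous.dist (hT.iterate k) continuous_id) continuous_const

lemma tauRet_mem_Oset {T : X → X} {N : ℕ} {s : ℝ} {x : X} (h : x ∈ Oset T N s) :
    1 ≤ tauRet T s x ∧ tauRet T s x ≤ N := by
  simp only [Oset, mem_iUnion, Finset.mem_Icc, mem_setOf_eq] at h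
  obtain ⟨k, ⟨hk1, hk2⟩, hk⟩ := h
  have hkmem : k ∈ {k : ℕ | 0 < k ∧ T^[k] x ∈ ball x s} := ⟨hk1, by simpa [mem_ball] using hk⟩
  constructor
  · exact (Nat.sInf_mem ⟨k, hkmem⟩).1
  · exact le_trans (Nat.sInf_le hkmem) hk2

/-- The key ratio bound at scale `s = (N⁻¹)^(j+1)` for a point of `Oset T N s`. -/
lemma ratio_bound {T : X → X} {N j : ℕ} {x : X} (hN : 2 ≤ N)
    (h : x ∈ Oset T N (((N : ℝ)⁻¹) ^ (j + 1))) :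
    Real.log (tauRet T (((N : ℝ)⁻¹) ^ (j + 1)) x : ℝ) /
      (-Real.log (((N : ℝ)⁻¹) ^ (j + 1))) ≤ ((j : ℝ) + 1)⁻¹ := by
  set s : ℝ := ((N : ℝ)⁻¹) ^ (j + 1)
  have hN1 : (1 : ℝ) < N := by exact_mod_cast lt_of_lt_of_le one_lt_two (by exact_mod_cast hN)
  have hlogN : 0 < Real.log N := Real.log_pos hN1
  have hden : -Real.log s = ((j : ℝ) + 1) * Real.log N := by
    have : Real.log s = ((j : ℝ) + 1) * Real.log ((N : ℝ)⁻¹) := by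
      rw [Real.log_pow]; push_cast; ring
    rw [this, Real.log_inv]; ring
  obtain ⟨h1, h2⟩ := tauRet_mem_Oset h
  have hτ : Real.log (tauRet T s x : ℝ) ≤ Real.log N := by
    apply Real.log_le_log (by exact_mod_cast h1)
    exact_mod_cast h2
  rw [hden]
  rw [div_le_iff₀ (by positivity)]
  calc Real.log (tauRet T s x : ℝ) ≤ Real.log N := hτ
    _ = ((j : ℝ) + 1)⁻¹ * (((j : ℝ) + 1) * Real.log N) := by
        field_simp

/-- The set of probability measures giving a closed set small mass is open. -/
lemma isOpen_measure_closed_lt {F : Set X} (hF : IsClosed F) (c : ℝ≥0∞) :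
    IsOpen {μ : ProbabilityMeasure X | μ.toMeasure F < c} := by
  rw [isOpen_iff_mem_nhds]
  intro μ hμ
  have hlim : (Filter.limsup (fun ν : ProbabilityMeasure X => ν.toMeasure F) (𝓝 μ))
      ≤ μ.toMeasure F :=
    ProbabilityMeasure.limsup_measure_closed_le_of_tendsto (μs := id) tendsto_id hF
  exact Filter.eventually_lt_of_limsup_lt (lt_of_le_of_lt hlim hμ)

/-- The lower recurrence rate is always nonnegative. -/
lemma Rlower_nonneg (T : X → X) (x : X) : (0 : EReal) ≤ Rlower T x := by
  refine Filter.le_liminf_of_le (by isBoundedDefault) ?_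
  filter_upwards [Ioo_mem_nhdsGT_of_mem (Set.mem_Ico.mpr ⟨le_refl (0:ℝ), zero_lt_one⟩)] with s hs
  have hnum : 0 ≤ Real.log (tauRet T s x : ℝ) := Real.log_natCast_nonneg _
  have hden : 0 < -Real.log s := by
    have := Real.log_neg hs.1 hs.2
    linarith
  exact_mod_cast div_nonneg hnum hden.le

/-- If for all large `m` the point `x` returns within `N m` steps at scale `(N m)⁻¹^(j+1)`,
then the lower recurrence rate is at most `(j+1)⁻¹`. -/
lemma Rlower_le_of_eventually {T : X → X} {j : ℕ} {N : ℕ → ℕ} {x : X}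
    (hNge : ∀ m, max m 2 ≤ N m)
    (hx : ∀ᶠ m in Filter.atTop, x ∈ Oset T (N m) (((N m : ℝ)⁻¹) ^ (j + 1))) :
    Rlower T x ≤ ((((j : ℝ) + 1)⁻¹ : ℝ) : EReal) := by
  obtain ⟨M, hM⟩ := Filter.eventually_atTop.mp hx
  set u : ℕ → ℝ := fun m => ((N (m + M) : ℝ)⁻¹) ^ (j + 1) with hu_def
  have hN2 : ∀ m, 2 ≤ N m := fun m => le_trans (le_max_right m 2) (hNge m)
  have hNpos : ∀ m, (0 : ℝ) < N m := fun m => by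
    have := hN2 m; positivity
  have hupos : ∀ m, 0 < u m := fun m => by
    have := hNpos (m + M); positivity
  -- u tends to 0 from the right
  have hNtop : Filter.Tendsto (fun m => ((N (m + M) : ℝ))) Filter.atTop Filter.atTop := by
    refine Filter.tendsto_atTop_mono (fun m => ?_) (tendsto_natCast_atTop_atTop (R := ℝ))
    exact_mod_cast le_trans (le_trans (Nat.le_add_right m M) (le_max_left _ 2)) (hNge (m + M))
  have hu0 : Filter.Tendsto u Filter.atTop (𝓝 (0 : ℝ)) := by
    have hinv : Filter.Tendsto (fun m => ((N (m + M) : ℝ))⁻¹) Filter.atTop (𝓝 (0 : ℝ)) :=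
      tendsto_inv_atTop_zero.comp hNtop
    have h' := hinv.pow (j + 1)
    rw [zero_pow (Nat.succ_ne_zero j)] at h'
    exact h'
  have hu : Filter.Tendsto u Filter.atTop (𝓝[>] (0 : ℝ)) :=
    tendsto_nhdsWithin_iff.mpr ⟨hu0, Filter.Eventually.of_forall hupos⟩
  set g : ℝ → EReal := fun s =>
    ((Real.log (tauRet T s x : ℝ) / (-Real.log s) : ℝ) : EReal) with hg_def
  have step1 : Rlower T x ≤ Filter.liminf g (Filter.map u Filter.atTop) :=
    Filter.liminf_le_liminf_of_le hu
  have step2 : Filter.liminf g (Filter.map u Filter.atTop)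
      = Filter.liminf (fun m => g (u m)) Filter.atTop := rfl
  have step3 : Filter.liminf (fun m => g (u m)) Filter.atTop
      ≤ ((((j : ℝ) + 1)⁻¹ : ℝ) : EReal) := by
    have hbd : ∀ m, g (u m) ≤ ((((j : ℝ) + 1)⁻¹ : ℝ) : EReal) := by
      intro m
      have hxm : x ∈ Oset T (N (m + M)) (((N (m + M) : ℝ)⁻¹) ^ (j + 1)) :=
        hM (m + M) (Nat.le_add_left M m)
      exact EReal.coe_le_coe_iff.mpr (ratio_bound (hN2 (m + M)) hxm)
    calc Filter.liminf (fun m => g (u m)) Filter.atTop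
        ≤ Filter.liminf (fun _ : ℕ => ((((j : ℝ) + 1)⁻¹ : ℝ) : EReal)) Filter.atTop :=
          Filter.liminf_le_liminf (Filter.Eventually.of_forall hbd)
      _ = ((((j : ℝ) + 1)⁻¹ : ℝ) : EReal) := Filter.liminf_const _
  calc Rlower T x ≤ Filter.liminf g (Filter.map u Filter.atTop) := step1
    _ = Filter.liminf (fun m => g (u m)) Filter.atTop := step2
    _ ≤ ((((j : ℝ) + 1)⁻¹ : ℝ) : EReal) := step3

/-- If `Rlower ≤ (j+1)⁻¹` for every `j` then `Rlower = 0`. -/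
lemma Rlower_eq_zero {T : X → X} {x : X}
    (h : ∀ j : ℕ, Rlower T x ≤ ((((j : ℝ) + 1)⁻¹ : ℝ) : EReal)) :
    Rlower T x = 0 := by
  refine le_antisymm ?_ (Rlower_nonneg T x)
  by_contra hlt
  push_neg at hlt
  obtain ⟨r, hr0, hrR⟩ := EReal.lt_iff_exists_real_btwn.mp hlt
  have hr0' : (0 : ℝ) < r := by exact_mod_cast hr0
  obtain ⟨j, hj⟩ := exists_nat_gt r⁻¹
  have hjr : (((j : ℝ) + 1)⁻¹ : ℝ) < r := by
    have h1 : r⁻¹ < (j : ℝ) + 1 := lt_trans hj (by linarith)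
    calc (((j : ℝ) + 1)⁻¹ : ℝ) < (r⁻¹)⁻¹ := by
          apply inv_strictAnti₀ (by positivity) h1
      _ = r := inv_inv r
  have : Rlower T x < Rlower T x :=
    lt_of_le_of_lt (h j) (lt_trans (by exact_mod_cast hjr) hrR)
  exact lt_irrefl _ this

end St2Aux

/-- For a topological dynamical system `(X,T)` with the `T`-periodic measures
dense in `M(T)`, the set `{μ ∈ M(T) | R̲(x) = 0 for μ-a.e. x}` is residual in `M(T)`. -/
theorem statement2 {X : Type*} [MetricSpace X] [CompactSpace X]
    [MeasurableSpace X] [BorelSpace X]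
    (T : X → X) (hT : Continuous T)
    (hdense : Dense {μ : ↥(invSet T) | IsPeriodicMeasure T μ.val}) :
    {μ : ↥(invSet T) | ∀ᵐ x ∂μ.val.toMeasure, Rlower T x = (0 : EReal)}
      ∈ residual ↥(invSet T) := by
  classical
  set U : ℕ → ℕ → Set ↥(invSet T) := fun j m =>
    {μ : ↥(invSet T) | ∃ N : ℕ, max m 2 ≤ N ∧
      μ.val.toMeasure ((Oset T N (((N : ℝ)⁻¹) ^ (j + 1)))ᶜ) < (2 : ℝ≥0∞)⁻¹ ^ (m + 1)}
    with hU_def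
  have hUopen : ∀ j m, IsOpen (U j m) := by
    intro j m
    have heq : U j m = ⋃ N ∈ {N : ℕ | max m 2 ≤ N},
        (Subtype.val ⁻¹' {μ : ProbabilityMeasure X |
          μ.toMeasure ((Oset T N (((N : ℝ)⁻¹) ^ (j + 1)))ᶜ) < (2 : ℝ≥0∞)⁻¹ ^ (m + 1)}) := by
      ext μ
      simp [hU_def]
    rw [heq]
    refine isOpen_biUnion fun N _ => ?_
    exact (isOpen_measure_closed_lt (isOpen_Oset T hT _ _).isClosed_compl _).preimage
      continuous_subtype_val
  have hUdense : ∀ j m, Dense (U j m) := by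
    intro j m
    refine Dense.mono ?_ hdense
    rintro μ ⟨x, k, hk, hfix, hμ⟩
    set N : ℕ := max (max m 2) k with hN_def
    have hkN : k ≤ N := le_max_right _ _
    have hN2 : 2 ≤ N := le_trans (le_max_right m 2) (le_max_left _ _)
    have hNpos : (0 : ℝ) < N := by positivity
    have hspos : (0 : ℝ) < ((N : ℝ)⁻¹) ^ (j + 1) := by positivity
    refine ⟨N, le_max_left _ _, ?_⟩
    have horb : ∀ i : ℕ, T^[i] x ∈ Oset T N (((N : ℝ)⁻¹) ^ (j + 1)) := by
      intro i
      simp only [Oset, mem_iUnion, Finset.mem_Icc, mem_setOf_eq]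
      refine ⟨k, ⟨hk, hkN⟩, ?_⟩
      have hfixi : T^[k] (T^[i] x) = T^[i] x := by
        rw [← Function.iterate_add_apply, Nat.add_comm, Function.iterate_add_apply, hfix]
      rw [hfixi, dist_self]
      exact hspos
    have hzero : μ.val.toMeasure ((Oset T N (((N : ℝ)⁻¹) ^ (j + 1)))ᶜ) = 0 := by
      rw [hμ]
      rw [Measure.smul_apply, Measure.finset_sum_apply]
      have : ∀ i ∈ Finset.range k,
          Measure.dirac (T^[i] x) ((Oset T N (((N : ℝ)⁻¹) ^ (j + 1)))ᶜ) = 0 := by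
        intro i _
        rw [Measure.dirac_apply]
        exact Set.indicator_of_notMem (by simpa using horb i) _
      rw [Finset.sum_eq_zero this]
      simp
    rw [hzero]
    exact ENNReal.pow_pos (by simp) _
  -- The residual dense Gδ set
  have hGmem : (⋂ j, ⋂ m, U j m) ∈ residual ↥(invSet T) := by
    refine (countable_iInter_mem.mpr fun j => ?_)
    refine (countable_iInter_mem.mpr fun m => ?_)
    exact residual_of_dense_open (hUopen j m) (hUdense j m)
  refine Filter.mem_of_superset hGmem ?_
  intro μ hμ
  simp only [mem_iInter] at hμ
  have hmem : ∀ j m : ℕ, ∃ N : ℕ, max m 2 ≤ N ∧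
      μ.val.toMeasure ((Oset T N (((N : ℝ)⁻¹) ^ (j + 1)))ᶜ) < (2 : ℝ≥0∞)⁻¹ ^ (m + 1) :=
    fun j m => hμ j m
  choose N hNge hNlt using hmem
  have hsum : ∀ j, (∑' m : ℕ,
      μ.val.toMeasure ((Oset T (N j m) (((N j m : ℝ)⁻¹) ^ (j + 1)))ᶜ)) ≠ ∞ := by
    intro j
    have hle : (∑' m : ℕ,
        μ.val.toMeasure ((Oset T (N j m) (((N j m : ℝ)⁻¹) ^ (j + 1)))ᶜ))
        ≤ ∑' m : ℕ, (2 : ℝ≥0∞)⁻¹ ^ (m + 1) :=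
      ENNReal.tsum_le_tsum fun m => (hNlt j m).le
    have hgeo : (∑' m : ℕ, (2 : ℝ≥0∞)⁻¹ ^ (m + 1)) = 2⁻¹ * (1 - 2⁻¹)⁻¹ :=
      ENNReal.tsum_geometric_add_one _
    rw [ENNReal.one_sub_inv_two] at hgeo
    refine ne_top_of_le_ne_top ?_ hle
    rw [hgeo]
    simp [ENNReal.inv_ne_top]
  have hae : ∀ j : ℕ, ∀ᵐ x ∂μ.val.toMeasure,
      ∀ᶠ m in Filter.atTop, x ∈ Oset T (N j m) (((N j m : ℝ)⁻¹) ^ (j + 1)) := by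
    intro j
    have := MeasureTheory.ae_eventually_notMem
      (s := fun m => (Oset T (N j m) (((N j m : ℝ)⁻¹) ^ (j + 1)))ᶜ) (hsum j)
    filter_upwards [this] with x hx
    exact hx.mono fun m hm => not_not.mp hm
  filter_upwards [MeasureTheory.ae_all_iff.mpr hae] with x hx
  exact Rlower_eq_zero fun j => Rlower_le_of_eventually (hNge j) (hx j)
end

section
/- Let X be a metric space and μ a Borel probability measure on X. Then the μ-essential infimum of the lower local dimension d̲_μ(x) equals dim_H^−(μ), and the μ-essential supremum of d̲_μ(x) equals dim_H^+(μ); in particular dim_H^−(μ) ≤ dim_H^+(μ). -/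
open MeasureTheory Filter Topology Metric Set
open scoped ENNReal NNReal

/-!
If `d̲_μ > c` on a set `F`, then on a piece of `F` of positive measure all balls of radius
`ε < δ` have mass at most `ε ^ c`, and the mass distribution principle gives `μ ≤ μH[c]` there;
so every set meeting `F` in positive measure has Hausdorff dimension at least `c`. If `d̲_μ < c`
on `A`, every point of `A` is the centre of arbitrarily small balls of mass at least `r ^ c`; a
Vitali `5r`-subcover by disjoint such balls gives `μH[c] A ≤ 10 ^ c μ(X) < ∞`, so `A` lies in a
Borel set of dimension at most `c`. Taking `c` above or below the essential infimum or supremum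
of `d̲_μ` yields the two equalities.
-/

lemma ediam_closedBall_le_ofReal {X : Type*} [PseudoMetricSpace X] (x : X) {R : ℝ}
    (hR : 0 ≤ R) : ediam (closedBall x R) ≤ ENNReal.ofReal (2 * R) := by
  rw [← closedEBall_ofReal hR, ENNReal.ofReal_mul zero_le_two, ENNReal.ofReal_ofNat]
  exact ediam_closedEBall_le

lemma lt_rpow_of_lt_log_div_log {c ε m : ℝ} (hε0 : 0 < ε) (hε1 : ε < 1) (hm : 0 < m)
    (h : c < Real.log m / Real.log ε) : m < ε ^ c := by
  rw [lt_div_iff_of_neg (Real.log_neg hε0 hε1), ← Real.log_rpow hε0] at h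
  exact (Real.log_lt_log_iff hm (Real.rpow_pos_of_pos hε0 c)).mp h

lemma rpow_lt_of_log_div_log_lt {c ε m : ℝ} (hε0 : 0 < ε) (hε1 : ε < 1) (hm : 0 < m)
    (h : Real.log m / Real.log ε < c) : ε ^ c < m := by
  rw [div_lt_iff_of_neg (Real.log_neg hε0 hε1), ← Real.log_rpow hε0] at h
  exact (Real.log_lt_log_iff (Real.rpow_pos_of_pos hε0 c) hm).mp h

lemma EReal.coe_le_coe_ennreal_of_ofReal_le {c : ℝ} {a : ℝ≥0∞} (h : ENNReal.ofReal c ≤ a) :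
    (c : EReal) ≤ a :=
  calc (c : EReal) ≤ max c 0 := mod_cast le_max_left c 0
    _ = (ENNReal.ofReal c : EReal) := EReal.coe_ennreal_ofReal.symm
    _ ≤ a := EReal.coe_ennreal_le_coe_ennreal_iff.mpr h

lemma EReal.coe_ennreal_le_coe_of_le_ofReal {c : ℝ} {a : ℝ≥0∞} (hc : 0 ≤ c)
    (h : a ≤ ENNReal.ofReal c) : (a : EReal) ≤ c := by
  simpa [EReal.coe_ennreal_ofReal, max_eq_left hc] using EReal.coe_ennreal_le_coe_ennreal_iff.mpr h

section LocalDimension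

variable {X : Type*} [MetricSpace X] [MeasurableSpace X] {μ : Measure X}

lemma dLoc_nonneg [IsZeroOrProbabilityMeasure μ] (x : X) : 0 ≤ dLoc μ x := by
  unfold dLoc
  split_ifs
  · refine le_liminf_of_le (by isBoundedDefault) ?_
    filter_upwards [Ioo_mem_nhdsGT one_pos] with ε hε
    have hμ : Real.log (μ (ball x ε)).toReal ≤ 0 :=
      Real.log_nonpos ENNReal.toReal_nonneg (ENNReal.toReal_le_of_le_ofReal zero_le_one
        (by simpa using prob_le_one))
    exact EReal.coe_nonneg.mpr (div_nonneg_of_nonpos hμ (Real.log_neg hε.1 hε.2).le)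
  · exact le_top

lemma eventually_measure_ball_le_of_lt_dLoc [IsFiniteMeasure μ] {x : X} {c : ℝ}
    (h : (c : EReal) < dLoc μ x) :
    ∀ᶠ ε in 𝓝[>] 0, μ (ball x ε) ≤ ENNReal.ofReal (ε ^ c) := by
  unfold dLoc at h
  split_ifs at h with hpos
  · filter_upwards [eventually_lt_of_lt_liminf h, Ioo_mem_nhdsGT one_pos] with ε hε hε1
    have hm : 0 < (μ (ball x ε)).toReal :=
      ENNReal.toReal_pos (hpos ε hε1.1).ne' (measure_ne_top μ _)
    rw [← ENNReal.ofReal_toReal (measure_ne_top μ (ball x ε))]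
    exact ENNReal.ofReal_le_ofReal
      (lt_rpow_of_lt_log_div_log hε1.1 hε1.2 hm (EReal.coe_lt_coe_iff.mp hε)).le
  · push Not at hpos
    obtain ⟨δ, hδ, hμδ⟩ := hpos
    filter_upwards [Ioo_mem_nhdsGT hδ] with ε hε
    exact (measure_mono (ball_subset_ball hε.2.le)).trans (hμδ.trans zero_le)

lemma frequently_le_measure_ball_of_dLoc_lt [IsFiniteMeasure μ] {x : X} {c : ℝ}
    (h : dLoc μ x < c) :
    ∃ᶠ ε in 𝓝[>] 0, ENNReal.ofReal (ε ^ c) ≤ μ (ball x ε) := by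
  unfold dLoc at h
  split_ifs at h with hpos
  · refine ((frequently_lt_of_liminf_lt (by isBoundedDefault) h).and_eventually
      (Ioo_mem_nhdsGT one_pos)).mono fun ε ⟨hε, hε1⟩ => ?_
    have hm : 0 < (μ (ball x ε)).toReal :=
      ENNReal.toReal_pos (hpos ε hε1.1).ne' (measure_ne_top μ _)
    rw [← ENNReal.ofReal_toReal (measure_ne_top μ (ball x ε))]
    exact ENNReal.ofReal_le_ofReal
      (rpow_lt_of_log_div_log_lt hε1.1 hε1.2 hm (EReal.coe_lt_coe_iff.mp hε)).le
  · exact absurd h not_top_lt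

lemma measure_closedBall_le_of_forall_measure_ball_le {x : X} {c d δ : ℝ} (hc : 0 ≤ c)
    (hd : 0 ≤ d) (hdδ : d < δ) (h : ∀ ε ∈ Ioo 0 δ, μ (ball x ε) ≤ ENNReal.ofReal (ε ^ c)) :
    μ (closedBall x d) ≤ ENNReal.ofReal (d ^ c) := by
  have hlim : Tendsto (fun ε : ℝ => ENNReal.ofReal (ε ^ c)) (𝓝[>] d)
      (𝓝 (ENNReal.ofReal (d ^ c))) :=
    ENNReal.tendsto_ofReal
      ((Real.continuousAt_rpow_const d c (Or.inr hc)).tendsto.mono_left nhdsWithin_le_nhds)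
  refine ge_of_tendsto hlim ?_
  filter_upwards [Ioo_mem_nhdsGT hdδ] with ε hε
  exact (measure_mono (closedBall_subset_ball hε.1)).trans (h ε ⟨hd.trans_lt hε.1, hε.2⟩)

lemma dimHminus_le_dimHplus [NeZero μ] : dimHminus μ ≤ dimHplus μ := by
  refine le_iInf₂ fun E hE => le_iInf fun hEc => iInf₂_le_of_le E hE (iInf_le_of_le ?_ le_rfl)
  have hμE : μ E = μ univ := by simpa using measure_inter_conull (s := univ) hEc
  exact hμE ▸ pos_iff_ne_zero.mpr (Measure.measure_univ_ne_zero.mpr (NeZero.ne μ))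

variable [BorelSpace X]

/-- Mass distribution principle. -/
lemma measure_le_hausdorffMeasure_of_forall_measure_ball_le {S : Set X} {c δ : ℝ} (hc : 0 ≤ c)
    (hδ : 0 < δ) (hS : ∀ x ∈ S, ∀ ε ∈ Ioo 0 δ, μ (ball x ε) ≤ ENNReal.ofReal (ε ^ c)) :
    μ S ≤ μH[c] S := by
  suffices μ.restrict S ≤ μH[c] by simpa [Measure.restrict_apply_self] using this S
  refine Measure.le_hausdorffMeasure c _ (ENNReal.ofReal (δ / 2)) (by simpa using hδ)
    fun s hs => ?_
  have hrestrict : μ.restrict S s ≤ μ (closure s ∩ S) := by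
    rw [← Measure.restrict_apply isClosed_closure.measurableSet]
    exact measure_mono subset_closure
  -- a set of small diameter meeting `S` in its closure lies in a closed ball centred in `S`
  rcases (closure s ∩ S).eq_empty_or_nonempty with hempty | ⟨x, hxs, hxS⟩
  · exact hrestrict.trans (by simp [hempty])
  have hfin : ediam s ≠ ⊤ := ne_top_of_le_ne_top ENNReal.ofReal_ne_top hs
  have hsub : closure s ⊆ closedBall x (ediam s).toReal := fun y hy => by
    rw [mem_closedBall, dist_edist]
    exact ENNReal.toReal_mono hfin (ediam_closure s ▸ edist_le_ediam_of_mem hy hxs)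
  have hdδ : (ediam s).toReal < δ :=
    (ENNReal.toReal_le_of_le_ofReal (by positivity) hs).trans_lt (by linarith)
  calc μ.restrict S s ≤ μ (closure s ∩ S) := hrestrict
    _ ≤ μ (closedBall x (ediam s).toReal) := measure_mono (inter_subset_left.trans hsub)
    _ ≤ ENNReal.ofReal ((ediam s).toReal ^ c) :=
      measure_closedBall_le_of_forall_measure_ball_le hc ENNReal.toReal_nonneg hdδ (hS x hxS)
    _ = ediam s ^ c := by
      rw [← ENNReal.ofReal_rpow_of_nonneg ENNReal.toReal_nonneg hc, ENNReal.ofReal_toReal hfin]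

lemma ofReal_le_dimH_of_eventually_measure_ball_le {S : Set X} {c : ℝ} (hc : 0 ≤ c)
    (hS : 0 < μ S) (h : ∀ x ∈ S, ∀ᶠ ε in 𝓝[>] 0, μ (ball x ε) ≤ ENNReal.ofReal (ε ^ c)) :
    ENNReal.ofReal c ≤ dimH S := by
  set T : ℕ → Set X := fun m =>
    {x ∈ S | ∀ ε ∈ Ioo 0 (1 / (m + 1 : ℝ)), μ (ball x ε) ≤ ENNReal.ofReal (ε ^ c)}
  have hST : S ⊆ ⋃ m, T m := fun x hx => by
    obtain ⟨δ, hδ, hδS⟩ := mem_nhdsGT_iff_exists_Ioo_subset.mp (h x hx)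
    obtain ⟨m, hm⟩ := exists_nat_one_div_lt (mem_Ioi.mp hδ)
    exact mem_iUnion.mpr ⟨m, hx, fun ε hε => hδS ⟨hε.1, hε.2.trans hm⟩⟩
  obtain ⟨m, hm⟩ : ∃ m, μ (T m) ≠ 0 := by
    by_contra! h0
    exact hS.ne' (measure_mono_null hST (measure_iUnion_null h0))
  have hH : μH[c] (T m) ≠ 0 := fun h0 => hm <| le_antisymm
    (h0 ▸ measure_le_hausdorffMeasure_of_forall_measure_ball_le hc Nat.one_div_pos_of_nat
      fun x hx => hx.2) zero_le
  calc ENNReal.ofReal c = (c.toNNReal : ℝ≥0∞) := rfl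
    _ ≤ dimH (T m) := le_dimH_of_hausdorffMeasure_ne_zero (by rwa [Real.coe_toNNReal c hc])
    _ ≤ dimH S := dimH_mono fun x hx => hx.1

lemma exists_disjoint_closedBall_cover_of_frequently_le_measure_ball [SFinite μ] {A : Set X}
    {c δ : ℝ} (hδ : 0 < δ)
    (hA : ∀ x ∈ A, ∃ᶠ ε in 𝓝[>] 0, ENNReal.ofReal (ε ^ c) ≤ μ (ball x ε)) :
    ∃ (u : Set X) (r : X → ℝ), u.Countable ∧ u.PairwiseDisjoint (fun b => closedBall b (r b)) ∧
      A ⊆ ⋃ b ∈ u, closedBall b (5 * r b) ∧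
      ∀ b ∈ u, 0 < r b ∧ r b ≤ δ ∧ ENNReal.ofReal (r b ^ c) ≤ μ (ball b (r b)) := by
  have hradius : ∀ x ∈ A, ∃ r, 0 < r ∧ r ≤ δ ∧ ENNReal.ofReal (r ^ c) ≤ μ (ball x r) :=
    fun x hx => by
      obtain ⟨r, hr, hrδ⟩ := ((hA x hx).and_eventually (Ioo_mem_nhdsGT hδ)).exists
      exact ⟨r, hrδ.1, hrδ.2.le, hr⟩
  choose! r hr using hradius
  obtain ⟨u, huA, hdisj, hcov⟩ := Vitali.exists_disjoint_subfamily_covering_enlargement_closedBall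
    A id r δ (fun a ha => (hr a ha).2.1) 5 (by norm_num)
  refine ⟨u, r, ?_, hdisj, fun a ha => ?_, fun b hb => hr b (huA hb)⟩
  · -- disjoint balls of positive measure are countably many
    have hcount := Measure.countable_meas_pos_of_disjoint_iUnion (μ := μ)
      (As := fun b : u => closedBall (b : X) (r b)) (fun _ => measurableSet_closedBall)
      (fun i j hij => hdisj i.2 j.2 (Subtype.coe_injective.ne hij))
    have hall : {b : u | 0 < μ (closedBall (b : X) (r b))} = univ :=
      eq_univ_of_forall fun b => (ENNReal.ofReal_pos.mpr
        (Real.rpow_pos_of_pos (hr b (huA b.2)).1 c)).trans_le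
        ((hr b (huA b.2)).2.2.trans (measure_mono ball_subset_closedBall))
    rw [hall] at hcount
    exact countable_coe_iff.mp (countable_univ_iff.mp hcount)
  · obtain ⟨b, hb, hab⟩ := hcov a ha
    exact mem_biUnion hb (hab (mem_closedBall_self (hr a ha).1.le))

lemma hausdorffMeasure_le_of_frequently_le_measure_ball [SFinite μ] {A : Set X} {c : ℝ}
    (hc : 0 ≤ c) (hA : ∀ x ∈ A, ∃ᶠ ε in 𝓝[>] 0, ENNReal.ofReal (ε ^ c) ≤ μ (ball x ε)) :
    μH[c] A ≤ ENNReal.ofReal (10 ^ c) * μ univ := by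
  choose u r hu hdisj hcov hr using fun n : ℕ =>
    exists_disjoint_closedBall_cover_of_frequently_le_measure_ball (μ := μ)
      (Nat.one_div_pos_of_nat (n := n)) hA
  have : ∀ n, Countable (u n) := fun n => (hu n).to_subtype
  have hδ : Tendsto (fun n : ℕ => ENNReal.ofReal (10 * (1 / (n + 1 : ℝ)))) atTop (𝓝 0) := by
    simpa using ENNReal.tendsto_ofReal (tendsto_one_div_add_atTop_nhds_zero_nat.const_mul 10)
  refine (Measure.hausdorffMeasure_le_liminf_tsum c A _ hδ
    (fun n (b : u n) => closedBall (b : X) (5 * r n b)) (Eventually.of_forall fun n b => ?_)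
    (Eventually.of_forall fun n => ?_)).trans
    (liminf_le_of_frequently_le' (Frequently.of_forall fun n => ?_))
  · obtain ⟨hr0, hrδ, -⟩ := hr n b b.2
    refine (ediam_closedBall_le_ofReal _ (by positivity)).trans (ENNReal.ofReal_le_ofReal ?_)
    linarith
  · intro a ha
    obtain ⟨b, hb, hab⟩ := mem_iUnion₂.mp (hcov n ha)
    exact mem_iUnion.mpr ⟨⟨b, hb⟩, hab⟩
  have hball : ∀ b : u n, ediam (closedBall (b : X) (5 * r n b)) ^ c ≤
      ENNReal.ofReal (10 ^ c) * μ (ball (b : X) (r n b)) := fun b => by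
    obtain ⟨hr0, -, hμ⟩ := hr n b b.2
    calc ediam (closedBall (b : X) (5 * r n b)) ^ c ≤ ENNReal.ofReal (2 * (5 * r n b)) ^ c :=
          ENNReal.rpow_le_rpow (ediam_closedBall_le_ofReal _ (by positivity)) hc
      _ = ENNReal.ofReal (10 ^ c) * ENNReal.ofReal (r n b ^ c) := by
          rw [ENNReal.ofReal_rpow_of_nonneg (by positivity) hc, ← ENNReal.ofReal_mul
            (by positivity), ← Real.mul_rpow (by norm_num) hr0.le]
          ring_nf
      _ ≤ ENNReal.ofReal (10 ^ c) * μ (ball (b : X) (r n b)) := by gcongr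
  calc ∑' b : u n, ediam (closedBall (b : X) (5 * r n b)) ^ c
      ≤ ∑' b : u n, ENNReal.ofReal (10 ^ c) * μ (ball (b : X) (r n b)) :=
        ENNReal.tsum_le_tsum hball
    _ = ENNReal.ofReal (10 ^ c) * ∑' b : u n, μ (ball (b : X) (r n b)) := ENNReal.tsum_mul_left
    _ ≤ ENNReal.ofReal (10 ^ c) * μ univ := by
        gcongr
        exact tsum_measure_le_measure_univ (fun _ => measurableSet_ball.nullMeasurableSet)
          fun i j hij => ((hdisj n i.2 j.2 (Subtype.coe_injective.ne hij)).mono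
            ball_subset_closedBall ball_subset_closedBall).aedisjoint

lemma exists_measurableSet_superset_dimH_le [IsFiniteMeasure μ] {A : Set X} {c : ℝ}
    (hc : 0 ≤ c) (hA : ∀ x ∈ A, ∃ᶠ ε in 𝓝[>] 0, ENNReal.ofReal (ε ^ c) ≤ μ (ball x ε)) :
    ∃ B, MeasurableSet B ∧ A ⊆ B ∧ dimH B ≤ ENNReal.ofReal c := by
  refine ⟨toMeasurable μH[c] A, measurableSet_toMeasurable _ _, subset_toMeasurable _ _,
    dimH_le_of_hausdorffMeasure_ne_top ?_⟩
  rw [Real.coe_toNNReal c hc, measure_toMeasurable]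
  exact ne_top_of_le_ne_top (ENNReal.mul_ne_top ENNReal.ofReal_ne_top (measure_ne_top μ univ))
    (hausdorffMeasure_le_of_frequently_le_measure_ball hc hA)

lemma ofReal_le_dimH_of_measure_inter_lt_dLoc_pos [IsFiniteMeasure μ] {E : Set X} {c : ℝ}
    (h : 0 < μ (E ∩ {x | (c : EReal) < dLoc μ x})) : ENNReal.ofReal c ≤ dimH E := by
  rcases le_total c 0 with hc | hc
  · simp [ENNReal.ofReal_of_nonpos hc]
  exact (ofReal_le_dimH_of_eventually_measure_ball_le hc h
    fun x hx => eventually_measure_ball_le_of_lt_dLoc hx.2).trans (dimH_mono inter_subset_left)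

variable [IsProbabilityMeasure μ]

lemma dimHminus_le_essInf_dLoc : (dimHminus μ : EReal) ≤ essInf (dLoc μ) μ := by
  refine EReal.le_of_forall_lt_iff_le.mp fun c hc => ?_
  have hpos : μ {x | dLoc μ x < c} ≠ 0 := fun h0 =>
    hc.not_ge (le_essInf_of_ae_le _ (ae_iff.mpr (by simpa using h0)))
  obtain ⟨x, hx⟩ := nonempty_of_measure_ne_zero hpos
  have hc0 : 0 ≤ c := EReal.coe_nonneg.mp ((dLoc_nonneg x).trans hx.le)
  obtain ⟨B, hBm, hAB, hB⟩ := exists_measurableSet_superset_dimH_le hc0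
    fun x hx => frequently_le_measure_ball_of_dLoc_lt (μ := μ) hx
  refine EReal.coe_ennreal_le_coe_of_le_ofReal hc0 (le_trans ?_ hB)
  exact iInf₂_le_of_le B hBm (iInf_le_of_le ((pos_iff_ne_zero.mpr hpos).trans_le
    (measure_mono hAB)) le_rfl)

lemma essInf_dLoc_le_dimHminus : essInf (dLoc μ) μ ≤ (dimHminus μ : EReal) := by
  refine EReal.ge_of_forall_gt_iff_ge.mp fun c hc => EReal.coe_le_coe_ennreal_of_ofReal_le
    (le_iInf₂ fun E _ => le_iInf fun hE =>
      ofReal_le_dimH_of_measure_inter_lt_dLoc_pos (μ := μ) ?_)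
  rwa [measure_inter_conull (ae_lt_of_lt_essInf hc)]

lemma dimHplus_le_essSup_dLoc : (dimHplus μ : EReal) ≤ essSup (dLoc μ) μ := by
  refine EReal.le_of_forall_lt_iff_le.mp fun c hc => ?_
  have hae : ∀ᵐ x ∂μ, dLoc μ x < c := ae_lt_of_essSup_lt hc
  obtain ⟨x, hx⟩ := hae.exists
  have hc0 : 0 ≤ c := EReal.coe_nonneg.mp ((dLoc_nonneg x).trans hx.le)
  obtain ⟨B, hBm, hAB, hB⟩ := exists_measurableSet_superset_dimH_le hc0
    fun x hx => frequently_le_measure_ball_of_dLoc_lt (μ := μ) hx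
  refine EReal.coe_ennreal_le_coe_of_le_ofReal hc0 (le_trans ?_ hB)
  exact iInf₂_le_of_le B hBm (iInf_le_of_le
    (measure_mono_null (compl_subset_compl.mpr hAB) hae) le_rfl)

lemma essSup_dLoc_le_dimHplus : essSup (dLoc μ) μ ≤ (dimHplus μ : EReal) := by
  refine EReal.ge_of_forall_gt_iff_ge.mp fun c hc => EReal.coe_le_coe_ennreal_of_ofReal_le
    (le_iInf₂ fun E _ => le_iInf fun hE =>
      ofReal_le_dimH_of_measure_inter_lt_dLoc_pos (μ := μ) ?_)
  have hpos : μ {x | c < dLoc μ x} ≠ 0 := fun h0 =>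
    hc.not_ge (essSup_le_of_ae_le _ (ae_iff.mpr (by simpa using h0)))
  rwa [inter_comm, measure_inter_conull hE, pos_iff_ne_zero]

end LocalDimension

/-- For a Borel probability measure `μ` on a metric space `X`, the
`μ`-essential infimum of the lower local dimension equals `dim_H⁻(μ)`, its `μ`-essential
supremum equals `dim_H⁺(μ)`, and in particular `dim_H⁻(μ) ≤ dim_H⁺(μ)`. -/
theorem statement6 {X : Type*} [MetricSpace X] [MeasurableSpace X] [BorelSpace X]
    (μ : Measure X) [IsProbabilityMeasure μ] :
    essInf (dLoc μ) μ = ((dimHminus μ : ℝ≥0∞) : EReal) ∧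
    essSup (dLoc μ) μ = ((dimHplus μ : ℝ≥0∞) : EReal) ∧
    dimHminus μ ≤ dimHplus μ :=
  ⟨essInf_dLoc_le_dimHminus.antisymm dimHminus_le_essInf_dLoc,
    essSup_dLoc_le_dimHplus.antisymm dimHplus_le_essSup_dLoc, dimHminus_le_dimHplus⟩
end
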